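/- Fix γ ∈ (0, 1/2] and let C be an irreducible row-stochastic matrix with positive left Perron vector c (Cᵀc = c, Σᵢcᵢ = 1). Any fixed point p⋆ ∈ Sₙ₋₁ of f(p) = (diag(γp) + Cᵀ diag(1 − γp)) p satisfies (1 − γp⋆ᵢ)p⋆ᵢ = κ cᵢ for all i, where κ = 1 − γ‖p⋆‖₂². -/

import Mathlib

/-!
The fixed-point equation says exactly that `qᵢ = (1 - γpᵢ)pᵢ` is a left fixed vector of `C`.
Left fixed vectors of an irreducible nonnegative matrix are multiples of the positive Perron
vector `c`, so `q = t • c`, and summing over `i` (with `∑ cᵢ = ∑ pᵢ = 1`) gives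
`t = 1 - γ‖p‖₂²`.
-/

open Matrix

namespace Matrix

variable {ι R : Type*} [Fintype ι] [DecidableEq ι]

lemma vecMul_pow_eq_self [Semiring R] {A : Matrix ι ι R} {v : ι → R} (hv : v ᵥ* A = v)
    (m : ℕ) : v ᵥ* (A ^ m) = v := by
  induction m with
  | zero => exact vecMul_one v
  | succ k ih => rw [pow_succ, ← vecMul_vecMul, ih, hv]

section CommRing

variable [CommRing R] [LinearOrder R] [IsStrictOrderedRing R] {A : Matrix ι ι R}

/-- Positive mass at `j` would flow to the zero entry along a path of positive weight. -/
lemma IsIrreducible.eq_zero_of_vecMul_eq_self (hA : A.IsIrreducible) {v : ι → R}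
    (hv0 : ∀ i, 0 ≤ v i) (hv : v ᵥ* A = v) {i₀ : ι} (hi₀ : v i₀ = 0) : v = 0 := by
  funext j
  by_contra hj
  have hvj : 0 < v j := (hv0 j).lt_of_ne' hj
  obtain ⟨m, -, hm⟩ := (isIrreducible_iff_exists_pow_pos hA.nonneg).mp hA j i₀
  have hsum : v i₀ = ∑ k, v k * (A ^ m) k i₀ := by
    conv_lhs => rw [← vecMul_pow_eq_self hv m]
    rfl
  have hterm : v j * (A ^ m) j i₀ ≤ ∑ k, v k * (A ^ m) k i₀ :=
    Finset.single_le_sum (fun k _ => mul_nonneg (hv0 k) (pow_apply_nonneg hA.nonneg m k i₀))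
      (Finset.mem_univ j)
  nlinarith [mul_pos hvj hm]

end CommRing

variable [Field R] [LinearOrder R] [IsStrictOrderedRing R] {A : Matrix ι ι R}

/-- Uniqueness of the left Perron vector up to scaling. -/
lemma IsIrreducible.exists_eq_smul_of_vecMul_eq_self (hA : A.IsIrreducible) {c q : ι → R}
    (hc0 : ∀ i, 0 < c i) (hc : c ᵥ* A = c) (hq : q ᵥ* A = q) : ∃ t : R, q = t • c := by
  cases isEmpty_or_nonempty ι
  · exact ⟨0, Subsingleton.elim _ _⟩
  -- `t` is the largest multiple of `c` lying below `q`, so `q - t • c` is nonnegative with a zero.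
  obtain ⟨i₀, -, hmin⟩ := Finset.exists_min_image Finset.univ (fun i => q i / c i)
    Finset.univ_nonempty
  set t := q i₀ / c i₀
  have hv0 : ∀ i, 0 ≤ (q - t • c) i := fun i => by
    have := (le_div_iff₀ (hc0 i)).mp (hmin i (Finset.mem_univ i))
    simp only [Pi.sub_apply, Pi.smul_apply, smul_eq_mul]
    linarith
  have hvi₀ : (q - t • c) i₀ = 0 := by
    simp [t, div_mul_cancel₀ _ (hc0 i₀).ne']
  have hv : (q - t • c) ᵥ* A = q - t • c := by
    rw [sub_vecMul, smul_vecMul, hq, hc]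
  exact ⟨t, sub_eq_zero.mp (hA.eq_zero_of_vecMul_eq_self hv0 hv hvi₀)⟩

end Matrix

theorem stmt14_general (n : ℕ) (γ : ℝ)
    (C : Matrix (Fin n) (Fin n) ℝ)
    (hC0 : ∀ i j, 0 ≤ C i j)
    (hirr : ∀ i j, ∃ m : ℕ, 0 < m ∧ 0 < (C ^ m) i j)
    (c : Fin n → ℝ) (hc0 : ∀ i, 0 < c i) (hc1 : ∑ i, c i = 1)
    (hcC : Cᵀ.mulVec c = c)
    (p : Fin n → ℝ) (hp1 : ∑ i, p i = 1)
    (hfix : ∀ j, γ * p j * p j + ∑ i, C i j * ((1 - γ * p i) * p i) = p j) :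
    ∀ i, (1 - γ * p i) * p i = (1 - γ * ∑ i, (p i) ^ 2) * c i := by
  set q : Fin n → ℝ := fun i => (1 - γ * p i) * p i
  have hC : C.IsIrreducible := (isIrreducible_iff_exists_pow_pos hC0).mpr hirr
  have hq : q ᵥ* C = q := funext fun j => by
    simp only [vecMul, dotProduct, mul_comm (q _)]
    linarith [hfix j]
  rw [mulVec_transpose] at hcC
  obtain ⟨t, hqt⟩ := hC.exists_eq_smul_of_vecMul_eq_self hc0 hcC hq
  have hsum : ∑ i, q i = 1 - γ * ∑ i, p i ^ 2 := by
    simp only [q, sub_mul, one_mul, Finset.sum_sub_distrib, hp1, Finset.mul_sum]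
    ring_nf
  have ht : t = 1 - γ * ∑ i, p i ^ 2 := by
    rw [← hsum, hqt]
    simp [← Finset.mul_sum, hc1]
  intro i
  rw [← ht]
  exact congrFun hqt i

/-- For `γ ∈ (0,1/2]` and `C` irreducible row-stochastic with positive normalized left
Perron vector `c`, any fixed point `p⋆` in the simplex of
`f(p) = (diag(γp) + Cᵀ diag(1 − γp)) p` satisfies
`(1 − γp⋆ᵢ)p⋆ᵢ = κ cᵢ` with `κ = 1 − γ‖p⋆‖₂²`. -/
theorem stmt14 (n : ℕ) (γ : ℝ) (hγ : γ ∈ Set.Ioc (0 : ℝ) (1 / 2))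
    (C : Matrix (Fin n) (Fin n) ℝ)
    (hC0 : ∀ i j, 0 ≤ C i j) (hC1 : ∀ i, ∑ j, C i j = 1)
    (hirr : ∀ i j, ∃ m : ℕ, 0 < m ∧ 0 < (C ^ m) i j)
    (c : Fin n → ℝ) (hc0 : ∀ i, 0 < c i) (hc1 : ∑ i, c i = 1)
    (hcC : Cᵀ.mulVec c = c)
    (p : Fin n → ℝ) (hp0 : ∀ i, 0 ≤ p i) (hp1 : ∑ i, p i = 1)
    (hfix : ∀ j, γ * p j * p j + ∑ i, C i j * ((1 - γ * p i) * p i) = p j) :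
    ∀ i, (1 - γ * p i) * p i = (1 - γ * ∑ i, (p i) ^ 2) * c i :=
  stmt14_general n γ C hC0 hirr c hc0 hc1 hcC p hp1 hfix
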